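/- arXiv:2204.07860 — 2 statements merged into one kernel-verified Lean document; each statement's English description precedes it below -/
import Mathlib

section
/- Let φ : Fin s → Fin r be a surjection (s > r ≥ 2), inducing the coarsening map Φ : V_{N,k} → V_{N,φ(k)} by Φ(x)_ℓ = φ(x_ℓ), where φ(k)_m = Σ_{n : φ(n)=m} k_n. Then for every real-valued function f on V_{N,φ(k)}, (L_{N,φ(k)} f) ∘ Φ = L_{N,k} (f ∘ Φ), where L denotes the pair-transposition graph Laplacian on the respective multislice. -/
open scoped Classical BigOperators

/-- The multislice: tuples `x : Fin N → Fin r` in which each value `m` is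
attained exactly `k m` times. -/
def multislice (N r : ℕ) (k : Fin r → ℕ) : Finset (Fin N → Fin r) :=
  Finset.univ.filter fun x => ∀ m : Fin r,
    (Finset.univ.filter fun ℓ => x ℓ = m).card = k m

/-- Adjacency by pair transpositions of coordinates. -/
def adjacent {N r : ℕ} (x y : Fin N → Fin r) : Prop :=
  x ≠ y ∧ ∃ i j : Fin N, i ≠ j ∧ y = x ∘ Equiv.swap i j

/-- The graph Laplacian on the multislice. -/
noncomputable def lap (N r : ℕ) (k : Fin r → ℕ) (f : (Fin N → Fin r) → ℝ)
    (x : Fin N → Fin r) : ℝ :=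
  ∑ y ∈ (multislice N r k).filter (fun y => adjacent x y), (f x - f y)

/-- The coarsened occupation vector `φ(k)`. -/
def coarse {s r : ℕ} (φ : Fin s → Fin r) (k : Fin s → ℕ) : Fin r → ℕ :=
  fun m => ∑ n ∈ Finset.univ.filter (fun n => φ n = m), k n

/-!
Every neighbour of `Φ x` has the form `Φ x ∘ (i j)` with `φ (x i) ≠ φ (x j)`, and it lifts to the
neighbour `x ∘ (i j)` of `x`; the lift is unique because a transposition that moves the values of a
tuple is determined by the two positions it changes. Neighbours `z` of `x` with `Φ z = Φ x`
contribute `0` to `L (f ∘ Φ) x`, and `Φ` maps the remaining ones bijectively onto the neighbours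
of `Φ x`, term by term.
-/

open Equiv Finset

section SwapComp

variable {α β : Type*} [DecidableEq α]

theorem comp_swap_eq_self_iff (w : α → β) (i j : α) : w ∘ swap i j = w ↔ w i = w j := by
  refine ⟨fun h => by simpa using congrFun h j, fun h => funext fun ℓ => ?_⟩
  rcases eq_or_ne ℓ i with rfl | hi
  · simp [h]
  rcases eq_or_ne ℓ j with rfl | hj
  · simp [h]
  · simp [swap_apply_of_ne_of_ne hi hj]

theorem comp_swap_apply_ne_iff {w : α → β} {i j : α} (hij : w i ≠ w j) (ℓ : α) :
    w (swap i j ℓ) ≠ w ℓ ↔ ℓ = i ∨ ℓ = j := by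
  rcases eq_or_ne ℓ i with rfl | hi
  · simpa using hij.symm
  rcases eq_or_ne ℓ j with rfl | hj
  · simpa using hij
  · simp [swap_apply_of_ne_of_ne hi hj, hi, hj]

/-- `swap i j` is the transposition of the two positions where `w ∘ swap i j` and `w` differ. -/
theorem swap_eq_swap_of_comp_eq {w : α → β} {i j i' j' : α} (hij : w i ≠ w j)
    (h : w ∘ swap i j = w ∘ swap i' j') : swap i j = swap i' j' := by
  have hij' : w i' ≠ w j' := by
    rw [Ne, ← comp_swap_eq_self_iff, ← h, comp_swap_eq_self_iff]
    exact hij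
  have hpair : ∀ ℓ, (ℓ = i ∨ ℓ = j) ↔ (ℓ = i' ∨ ℓ = j') := fun ℓ => by
    rw [← comp_swap_apply_ne_iff hij, ← comp_swap_apply_ne_iff hij']
    rw [show w (swap i j ℓ) = w (swap i' j' ℓ) from congrFun h ℓ]
  have hi := (hpair i).1 (Or.inl rfl)
  have hj := (hpair j).1 (Or.inr rfl)
  have hne : i ≠ j := fun e => hij (e ▸ rfl)
  rcases hi with rfl | rfl <;> rcases hj with rfl | rfl
  all_goals first | exact absurd rfl hne | rfl | exact swap_comm _ _

end SwapComp

variable {N r s : ℕ}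

theorem adjacent_iff {x y : Fin N → Fin r} :
    adjacent x y ↔ ∃ i j, x i ≠ x j ∧ y = x ∘ swap i j := by
  constructor
  · rintro ⟨hxy, i, j, -, rfl⟩
    exact ⟨i, j, fun h => hxy ((comp_swap_eq_self_iff x i j).2 h).symm, rfl⟩
  · rintro ⟨i, j, hij, rfl⟩
    exact ⟨fun h => hij ((comp_swap_eq_self_iff x i j).1 h.symm),
      i, j, fun e => hij (e ▸ rfl), rfl⟩

theorem comp_perm_mem_multislice {k : Fin r → ℕ} {x : Fin N → Fin r}
    (hx : x ∈ multislice N r k) (e : Perm (Fin N)) : x ∘ e ∈ multislice N r k := by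
  simp only [multislice, mem_filter, mem_univ, true_and] at hx ⊢
  intro m
  rw [← hx m]
  exact card_equiv e (by simp)

theorem comp_mem_multislice_coarse (φ : Fin s → Fin r) {k : Fin s → ℕ}
    {x : Fin N → Fin s} (hx : x ∈ multislice N s k) :
    φ ∘ x ∈ multislice N r (coarse φ k) := by
  simp only [multislice, mem_filter, mem_univ, true_and] at hx ⊢
  intro m
  rw [card_eq_sum_card_fiberwise (f := x) (t := univ.filter (φ · = m))
    (fun ℓ hℓ => by simpa using hℓ)]
  refine sum_congr rfl fun n hn => ?_
  rw [filter_filter, ← hx n]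
  congr 1
  ext ℓ
  simp only [mem_filter, mem_univ, true_and] at hn ⊢
  constructor
  · exact And.right
  · rintro rfl; exact ⟨hn, rfl⟩

noncomputable def movingNeighbors (φ : Fin s → Fin r) (k : Fin s → ℕ) (x : Fin N → Fin s) :
    Finset (Fin N → Fin s) :=
  (multislice N s k).filter fun z => adjacent x z ∧ φ ∘ z ≠ φ ∘ x

section Coarsening

variable (φ : Fin s → Fin r) {k : Fin s → ℕ} {x : Fin N → Fin s}

theorem image_movingNeighbors (hx : x ∈ multislice N s k) :
    (movingNeighbors φ k x).image (φ ∘ ·) =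
      (multislice N r (coarse φ k)).filter fun y => adjacent (φ ∘ x) y := by
  ext y
  simp only [movingNeighbors, mem_image, mem_filter, adjacent_iff]
  constructor
  · rintro ⟨_, ⟨hz, ⟨i, j, -, rfl⟩, hmove⟩, rfl⟩
    have hφij : φ (x i) ≠ φ (x j) := mt ((comp_swap_eq_self_iff (φ ∘ x) i j).2) hmove
    exact ⟨comp_mem_multislice_coarse φ hz, i, j, hφij, rfl⟩
  · rintro ⟨-, i, j, hφij, rfl⟩
    refine ⟨x ∘ swap i j, ⟨comp_perm_mem_multislice hx _, ⟨i, j, ?_, rfl⟩, ?_⟩, rfl⟩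
    · exact fun h => hφij (congrArg φ h)
    · exact mt (comp_swap_eq_self_iff (φ ∘ x) i j).1 hφij

theorem injOn_movingNeighbors :
    Set.InjOn (φ ∘ ·) (movingNeighbors φ k x : Set (Fin N → Fin s)) := by
  intro z hz z' hz' h
  simp only [movingNeighbors, mem_coe, mem_filter, adjacent_iff] at hz hz'
  obtain ⟨-, ⟨i, j, -, rfl⟩, hmove⟩ := hz
  obtain ⟨-, ⟨i', j', -, rfl⟩, -⟩ := hz'
  have hφij : φ (x i) ≠ φ (x j) := mt ((comp_swap_eq_self_iff (φ ∘ x) i j).2) hmove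
  simp only [swap_eq_swap_of_comp_eq (w := φ ∘ x) hφij h]

end Coarsening

theorem lap_coarse_intertwine_general (N s r : ℕ)
    (φ : Fin s → Fin r) (k : Fin s → ℕ)
    (f : (Fin N → Fin r) → ℝ) (x : Fin N → Fin s)
    (hx : x ∈ multislice N s k) :
    lap N r (coarse φ k) f (φ ∘ x) = lap N s k (fun z => f (φ ∘ z)) x := by
  have hcollapsed : ∀ z ∈ (multislice N s k).filter (adjacent x),
      f (φ ∘ x) - f (φ ∘ z) ≠ 0 → φ ∘ z ≠ φ ∘ x :=
    fun z _ hfz hz => hfz (by rw [hz, sub_self])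
  unfold lap
  rw [← image_movingNeighbors φ hx, sum_image (injOn_movingNeighbors φ),
    ← sum_filter_of_ne hcollapsed, filter_filter]
  rfl

/-- The coarsening map intertwines the graph Laplacians:
`(L_{N,φ(k)} f) ∘ Φ = L_{N,k} (f ∘ Φ)`. -/
theorem lap_coarse_intertwine (N s r : ℕ) (hr : 2 ≤ r) (hs : r < s)
    (φ : Fin s → Fin r) (hφ : Function.Surjective φ) (k : Fin s → ℕ)
    (f : (Fin N → Fin r) → ℝ) (x : Fin N → Fin s)
    (hx : x ∈ multislice N s k) :
    lap N r (coarse φ k) f (φ ∘ x) = lap N s k (fun z => f (φ ∘ z)) x :=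
  lap_coarse_intertwine_general N s r φ k f x hx
end

section
/- Let k = (k_0,…,k_{r-1}) be nonnegative integers summing to N, and let g : Fin r → ℝ satisfy Σ_m k_m g(m) = 0. Fix ℓ ∈ Fin N and define f on the multislice V_{N,k} by f(x) = g(x_ℓ). Then L_{N,k} f = N f, where L_{N,k} is the pair-transposition graph Laplacian. -/
open scoped Classical BigOperators

/-!
The neighbours `y` of `x` with `y ℓ ≠ x ℓ` are exactly the tuples `x ∘ swap ℓ j` with
`x j ≠ x ℓ`, one for each such `j`, and every other neighbour contributes `0`. Hence
`L f x = ∑ j, (g (x ℓ) - g (x j)) = N g (x ℓ) - ∑ m, k m g m`, and the last sum vanishes.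
-/

open Finset

namespace Multislice

variable {N r : ℕ} {k : Fin r → ℕ} {x : Fin N → Fin r}

theorem comp_perm_mem (hx : x ∈ multislice N r k) (σ : Equiv.Perm (Fin N)) :
    x ∘ σ ∈ multislice N r k := by
  simp only [multislice, mem_filter, mem_univ, true_and] at hx ⊢
  intro m
  rw [← hx m]
  exact card_equiv σ (by simp)

theorem sum_comp_eq_sum_nsmul {M : Type*} [AddCommMonoid M] (hx : x ∈ multislice N r k)
    (g : Fin r → M) : ∑ j, g (x j) = ∑ m, k m • g m := by
  rw [← sum_fiberwise' univ x g]
  refine sum_congr rfl fun m _ => ?_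
  simp only [multislice, mem_filter, mem_univ, true_and] at hx
  rw [sum_const, hx m]

end Multislice

section Adjacency

variable {N r : ℕ} {x y : Fin N → Fin r} {ℓ j : Fin N}

theorem adjacent_comp_swap (h : x j ≠ x ℓ) : adjacent x (x ∘ Equiv.swap ℓ j) := by
  refine ⟨fun he => h ?_, ℓ, j, fun hℓj => h (hℓj ▸ rfl), rfl⟩
  simpa using (congrFun he ℓ).symm

theorem exists_eq_comp_swap_of_adjacent (h : adjacent x y) (hy : y ℓ ≠ x ℓ) :
    ∃ j, y = x ∘ Equiv.swap ℓ j := by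
  obtain ⟨-, i, j, -, rfl⟩ := h
  by_cases hi : ℓ = i
  · exact ⟨j, hi ▸ rfl⟩
  by_cases hj : ℓ = j
  · exact ⟨i, by rw [hj, Equiv.swap_comm]⟩
  exact absurd (by simp [Equiv.swap_apply_of_ne_of_ne hi hj]) hy

theorem injOn_comp_swap :
    Set.InjOn (fun j => x ∘ Equiv.swap ℓ j) {j | x j ≠ x ℓ} := by
  intro j₁ hj₁ j₂ _ h
  by_contra hne
  have hℓ : j₁ ≠ ℓ := fun h => hj₁ (h ▸ rfl)
  have := congrFun h j₁
  simp [Equiv.swap_apply_of_ne_of_ne hℓ hne] at this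
  exact hj₁ this.symm

end Adjacency

theorem lap_comp_eval_eq_sum {N r : ℕ} {k : Fin r → ℕ} {x : Fin N → Fin r}
    (hx : x ∈ multislice N r k) (g : Fin r → ℝ) (ℓ : Fin N) :
    lap N r k (fun z => g (z ℓ)) x = ∑ j, (g (x ℓ) - g (x j)) := by
  rw [lap, ← sum_filter_of_ne (p := fun y => y ℓ ≠ x ℓ) (by grind),
    ← sum_filter_of_ne (p := fun j => x j ≠ x ℓ) (by grind)]
  refine (sum_nbij (fun j => x ∘ Equiv.swap ℓ j) ?_ ?_ ?_ ?_).symm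
  · intro j hj
    have hj : x j ≠ x ℓ := (mem_filter.mp hj).2
    simp [Multislice.comp_perm_mem hx, adjacent_comp_swap hj, hj]
  · exact injOn_comp_swap.mono fun j hj => (mem_filter.mp hj).2
  · intro y hy
    simp only [coe_filter, mem_filter, Set.mem_ofPred_eq] at hy
    obtain ⟨j, rfl⟩ := exists_eq_comp_swap_of_adjacent hy.1.2 hy.2
    exact ⟨j, by simpa using hy.2, rfl⟩
  · simp

theorem lap_single_coordinate_eigenfunction_general (N r : ℕ) (k : Fin r → ℕ)
    (g : Fin r → ℝ) (hg : ∑ m, (k m : ℝ) * g m = 0)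
    (ℓ : Fin N) (x : Fin N → Fin r) (hx : x ∈ multislice N r k) :
    lap N r k (fun z => g (z ℓ)) x = N * g (x ℓ) := by
  have hsum : ∑ j, g (x j) = 0 := by
    simpa [Multislice.sum_comp_eq_sum_nsmul hx, nsmul_eq_mul] using hg
  rw [lap_comp_eval_eq_sum hx, sum_sub_distrib, hsum, sum_const, card_univ, Fintype.card_fin,
    nsmul_eq_mul, sub_zero]

/-- If `∑ m, k m • g m = 0` then `x ↦ g (x ℓ)` is an eigenfunction of the
multislice graph Laplacian with eigenvalue `N`. -/
theorem lap_single_coordinate_eigenfunction (N r : ℕ) (k : Fin r → ℕ)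
    (hk : ∑ m, k m = N) (g : Fin r → ℝ) (hg : ∑ m, (k m : ℝ) * g m = 0)
    (ℓ : Fin N) (x : Fin N → Fin r) (hx : x ∈ multislice N r k) :
    lap N r k (fun z => g (z ℓ)) x = N * g (x ℓ) :=
  lap_single_coordinate_eigenfunction_general N r k g hg ℓ x hx
end
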